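/- With N odd, C ⊂ E(k) cyclic of order N, s_O normalized with divisor N·O − C, s_P := τ_{−P}^* s_O for P ∈ C, and g_χ := Σ_{P∈C} χ(P)·s_P for a character χ : C → k^×, one has [−1]^* g_χ = g_{χ^{−1}} for every character χ. -/

import Mathlib

/-- An abstract model of the group of points and the function field of an elliptic curve `E`
over `k`, together with divisors, pullbacks along translations and inversion, and the
pushforward (norm) maps `[n]_*` along the multiplication-by-`n` isogenies. -/
structure CurveFn (k : Type) [Field k] where
  /-- the group of points `E(k)` (all points are closed since `k` is algebraically closed) -/
  Pt : Type
  [grp : AddCommGroup Pt]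
  /-- the function field `k(E)` -/
  F : Type
  [fld : Field F]
  [alg : Algebra k F]
  /-- the divisor of a nonzero rational function -/
  div : Fˣ → (Pt →₀ ℤ)
  div_mul : ∀ f g : Fˣ, div (f * g) = div f + div g
  div_degree : ∀ f : Fˣ, (div f).sum (fun _ n => n) = 0
  /-- the inclusion of the constants `k^× ⊆ k(E)^×` -/
  constU : kˣ →* Fˣ
  constU_spec : ∀ a : kˣ, ((constU a : Fˣ) : F) = algebraMap k F (a : k)
  div_constU : ∀ a : kˣ, div (constU a) = 0
  eq_constU_of_div_eq_zero : ∀ f : Fˣ, div f = 0 → ∃ a : kˣ, f = constU a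
  /-- pullback `τ_P^*` along translation by a point `P` -/
  tau : Pt → (F ≃+* F)
  tau_algebraMap : ∀ (P : Pt) (a : k), tau P (algebraMap k F a) = algebraMap k F a
  tau_zero : tau 0 = RingEquiv.refl F
  tau_add : ∀ P Q : Pt, tau (P + Q) = (tau Q).trans (tau P)
  div_tau : ∀ (P : Pt) (f : Fˣ),
    div (Units.map (tau P).toRingHom.toMonoidHom f) = (div f).mapDomain (fun x => x - P)
  /-- the pushforward (norm) `[n]_*` along multiplication by `n` -/
  pushNorm : ℕ → (Fˣ →* Fˣ)
  div_pushNorm : ∀ (n : ℕ) (f : Fˣ),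
    div (pushNorm n f) = (div f).mapDomain (fun P => (n : ℤ) • P)
  pushNorm_constU : ∀ (n : ℕ) (a : kˣ), pushNorm n (constU a) = constU (a ^ (n ^ 2))
  pushNorm_mul_eq : ∀ m n : ℕ, pushNorm (m * n) = (pushNorm m).comp (pushNorm n)
  pushNorm_tau : ∀ (n : ℕ) (P : Pt) (f : Fˣ),
    pushNorm n (Units.map (tau P).toRingHom.toMonoidHom f)
      = Units.map (tau (n • P)).toRingHom.toMonoidHom (pushNorm n f)
  /-- pullback `[-1]^*` along the inversion map of `E` -/
  negPull : F ≃+* F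
  negPull_algebraMap : ∀ a : k, negPull (algebraMap k F a) = algebraMap k F a
  negPull_negPull : ∀ x : F, negPull (negPull x) = x
  div_negPull : ∀ f : Fˣ,
    div (Units.map negPull.toRingHom.toMonoidHom f) = (div f).mapDomain (fun x => -x)
  negPull_tau : ∀ (P : Pt) (x : F), negPull (tau (-P) x) = tau P (negPull x)

attribute [instance] CurveFn.grp CurveFn.fld CurveFn.alg

variable {k : Type} [Field k]

/-- pullback along translation, on units -/
def CurveFn.tauU (X : CurveFn k) (P : X.Pt) : X.Fˣ →* X.Fˣ :=
  Units.map (X.tau P).toRingHom.toMonoidHom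

/-- pullback along inversion, on units -/
def CurveFn.negPullU (X : CurveFn k) : X.Fˣ →* X.Fˣ :=
  Units.map X.negPull.toRingHom.toMonoidHom

/-- `a` is a root of unity. -/
def IsRootOfUnity {M : Type*} [Monoid M] (a : M) : Prop := ∃ n : ℕ, 0 < n ∧ a ^ n = 1

/-- `f ∈ k(E)^×` is *normalized* if `[n]_* f` is a constant root of unity for some `n ≥ 1`. -/
def CurveFn.Normalized (X : CurveFn k) (f : X.Fˣ) : Prop :=
  ∃ n : ℕ, 0 < n ∧ ∃ u : kˣ, IsRootOfUnity u ∧ X.pushNorm n f = X.constU u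

/-!
The divisor `C` is symmetric, so `[-1]^* s_O` has the same divisor as `s_O` and equals `a • s_O`
for a constant `a`; as `[-1]^*` is an involution, `a ^ 2 = 1`. The product of the `N` translates
`τ_{-P}^* s_O` has divisor `N • C - N • C = 0`, so it is a constant, fixed by `[-1]^*`; but
`[-1]^* τ_{-P}^* s_O = a • τ_P^* s_O` shows that `[-1]^*` multiplies it by `a ^ N`. Hence
`a ^ N = 1`, and `N` odd forces `a = 1`: `s_O` is even, and then `[-1]^*` maps `s_P` to `s_{-P}`.
-/

open Finsupp

noncomputable def imageDivisor {G P : Type*} [Fintype G] (ι : G → P) : P →₀ ℤ :=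
  ∑ g, single (ι g) 1

lemma mapDomain_imageDivisor {G P : Type*} [Fintype G] {ι : G → P} (e : P → P) (φ : G ≃ G)
    (h : ∀ g, e (ι g) = ι (φ g)) : (imageDivisor ι).mapDomain e = imageDivisor ι := by
  rw [imageDivisor, mapDomain_finsetSum]
  simp only [mapDomain_single, h]
  exact Fintype.sum_equiv φ _ _ fun _ => rfl

namespace CurveFn

variable (X : CurveFn k)

lemma div_one : X.div 1 = 0 := by
  simpa using X.div_mul 1 1

lemma div_inv (f : X.Fˣ) : X.div f⁻¹ = -X.div f := by
  have h := X.div_mul f f⁻¹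
  rw [mul_inv_cancel, X.div_one] at h
  exact eq_neg_of_add_eq_zero_right h.symm

lemma div_prod {ι : Type*} (t : Finset ι) (f : ι → X.Fˣ) :
    X.div (∏ i ∈ t, f i) = ∑ i ∈ t, X.div (f i) :=
  map_sum (AddMonoidHom.mk' (X.div ∘ Additive.toMul) X.div_mul) (Additive.ofMul ∘ f) t

lemma constU_injective : Function.Injective X.constU := fun a b hab =>
  Units.ext <| (algebraMap k X.F).injective <| by
    rw [← X.constU_spec, ← X.constU_spec, hab]

lemma exists_eq_constU_mul_of_div_eq {f g : X.Fˣ} (h : X.div f = X.div g) :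
    ∃ a, f = X.constU a * g := by
  obtain ⟨a, ha⟩ := X.eq_constU_of_div_eq_zero (f * g⁻¹)
    (by rw [X.div_mul, X.div_inv, h, add_neg_cancel])
  exact ⟨a, by rw [← ha, inv_mul_cancel_right]⟩

lemma div_tauU (P : X.Pt) (f : X.Fˣ) :
    X.div (X.tauU P f) = (X.div f).mapDomain (· - P) :=
  X.div_tau P f

lemma div_negPullU (f : X.Fˣ) : X.div (X.negPullU f) = (X.div f).mapDomain (-·) :=
  X.div_negPull f

lemma tauU_constU (P : X.Pt) (a : kˣ) : X.tauU P (X.constU a) = X.constU a :=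
  Units.ext <| by simp [tauU, X.constU_spec, X.tau_algebraMap]

lemma negPullU_constU (a : kˣ) : X.negPullU (X.constU a) = X.constU a :=
  Units.ext <| by simp [negPullU, X.constU_spec, X.negPull_algebraMap]

lemma negPullU_negPullU (f : X.Fˣ) : X.negPullU (X.negPullU f) = f :=
  Units.ext <| X.negPull_negPull f

lemma negPullU_tauU (P : X.Pt) (f : X.Fˣ) :
    X.negPullU (X.tauU (-P) f) = X.tauU P (X.negPullU f) :=
  Units.ext <| X.negPull_tau P f

lemma sq_eq_one_of_negPullU_eq {f : X.Fˣ} {a : kˣ} (h : X.negPullU f = X.constU a * f) :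
    a ^ 2 = 1 := by
  have hf := congrArg X.negPullU h
  rw [X.negPullU_negPullU, map_mul, X.negPullU_constU, h, ← mul_assoc, ← map_mul] at hf
  exact X.constU_injective <| by rw [sq, map_one, ← mul_eq_right.mp hf.symm]

section Translates

variable {G : Type*} [AddCommGroup G] [Fintype G] (ι : G →+ X.Pt)

lemma pow_card_eq_one_of_negPullU_eq {f : X.Fˣ} {a : kˣ} (h : X.negPullU f = X.constU a * f)
    (hprod : X.div (∏ g, X.tauU (-ι g) f) = 0) : a ^ Fintype.card G = 1 := by
  obtain ⟨b, hb⟩ := X.eq_constU_of_div_eq_zero _ hprod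
  have hneg : X.negPullU (∏ g, X.tauU (-ι g) f)
      = X.constU a ^ Fintype.card G * ∏ g, X.tauU (-ι g) f := by
    simp_rw [map_prod, X.negPullU_tauU, h, map_mul, X.tauU_constU, Finset.prod_mul_distrib,
      Finset.prod_const, Finset.card_univ]
    congr 1
    exact Fintype.prod_equiv (Equiv.neg G) _ _ fun g => by simp
  rw [hb, X.negPullU_constU, ← map_pow] at hneg
  exact X.constU_injective <| by rw [map_one, ← mul_eq_right.mp hneg.symm]

variable {s : X.Fˣ}
  (hdiv : X.div s = single 0 (Fintype.card G : ℤ) - imageDivisor ι)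
include hdiv

lemma div_negPullU_of_div_eq : X.div (X.negPullU s) = X.div s := by
  rw [X.div_negPullU, hdiv, mapDomain_sub, mapDomain_single, neg_zero,
    mapDomain_imageDivisor _ (Equiv.neg G) fun g => (map_neg ι g).symm]

lemma div_tauU_of_div_eq (g : G) :
    X.div (X.tauU (-ι g) s) = single (ι g) (Fintype.card G : ℤ) - imageDivisor ι := by
  rw [X.div_tauU, hdiv, mapDomain_sub, mapDomain_single, zero_sub, neg_neg,
    mapDomain_imageDivisor _ (Equiv.addRight g) fun h => by simp]

lemma div_prod_tauU_of_div_eq : X.div (∏ g, X.tauU (-ι g) s) = 0 := by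
  rw [X.div_prod, Finset.sum_congr rfl fun g _ => X.div_tauU_of_div_eq ι hdiv g,
    Finset.sum_sub_distrib, Finset.sum_const, Finset.card_univ, sub_eq_zero, imageDivisor]
  simp_rw [Finset.smul_sum, smul_single, nsmul_eq_mul, mul_one]

lemma negPullU_eq_self_of_div_eq (hodd : Odd (Fintype.card G)) : X.negPullU s = s := by
  obtain ⟨a, ha⟩ := X.exists_eq_constU_mul_of_div_eq (X.div_negPullU_of_div_eq ι hdiv)
  have ha1 : a = 1 := (pow_eq_one_iff_of_coprime hodd.coprime_two_left).mp
    ⟨X.sq_eq_one_of_negPullU_eq ha,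
      X.pow_card_eq_one_of_negPullU_eq ι ha (X.div_prod_tauU_of_div_eq ι hdiv)⟩
  rw [ha, ha1, map_one, one_mul]

end Translates

lemma negPull_sum_mul_tau {G : Type*} [AddCommGroup G] [Fintype G] (ι : G →+ X.Pt) (c : G → k)
    {x : X.F} (hx : X.negPull x = x) :
    X.negPull (∑ g, algebraMap k X.F (c g) * X.tau (-ι g) x)
      = ∑ g, algebraMap k X.F (c (-g)) * X.tau (-ι g) x := by
  simp_rw [map_sum, map_mul, X.negPull_algebraMap, X.negPull_tau, hx]
  exact Fintype.sum_equiv (Equiv.neg G) _ _ fun g => by simp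

end CurveFn

theorem inversion_swaps_g_chi_general
    (k : Type) [Field k] (X : CurveFn k)
    (N : ℕ) [NeZero N] (hodd : Odd N)
    (ι : ZMod N →+ X.Pt)
    (s : X.Fˣ)
    (hdiv : X.div s =
      Finsupp.single (0 : X.Pt) (N : ℤ) - ∑ j : ZMod N, Finsupp.single (ι j) (1 : ℤ))
    (χ : AddChar (ZMod N) kˣ) :
    X.negPull (∑ j : ZMod N,
        algebraMap k X.F ((χ j : kˣ) : k) * X.tau (-(ι j)) ((s : X.Fˣ) : X.F))
      = ∑ j : ZMod N,
        algebraMap k X.F ((χ (-j) : kˣ) : k) * X.tau (-(ι j)) ((s : X.Fˣ) : X.F) := by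
  have hs : X.negPullU s = s :=
    X.negPullU_eq_self_of_div_eq ι (by rwa [ZMod.card]) (by rwa [ZMod.card])
  exact X.negPull_sum_mul_tau ι (fun j => (χ j : k)) (congrArg Units.val hs)

/-- With `N` odd, `C ⊂ E(k)` cyclic of order `N`, `s_O` normalized with divisor
`N·O − C`, `s_P := τ_{−P}^* s_O` for `P ∈ C`, and `g_χ := Σ_{P∈C} χ(P)·s_P` for a character
`χ : C → k^×`, one has `[−1]^* g_χ = g_{χ^{−1}}` (note `χ⁻¹(P) = χ(−P)`). -/
theorem inversion_swaps_g_chi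
    (k : Type) [Field k] [IsAlgClosed k] (X : CurveFn k)
    (N : ℕ) [NeZero N] (hodd : Odd N) (hchar : (N : k) ≠ 0)
    (ι : ZMod N →+ X.Pt) (hι : Function.Injective ι)
    (s : X.Fˣ) (hs : X.Normalized s)
    (hdiv : X.div s =
      Finsupp.single (0 : X.Pt) (N : ℤ) - ∑ j : ZMod N, Finsupp.single (ι j) (1 : ℤ))
    (χ : AddChar (ZMod N) kˣ) :
    X.negPull (∑ j : ZMod N,
        algebraMap k X.F ((χ j : kˣ) : k) * X.tau (-(ι j)) ((s : X.Fˣ) : X.F))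
      = ∑ j : ZMod N,
        algebraMap k X.F ((χ (-j) : kˣ) : k) * X.tau (-(ι j)) ((s : X.Fˣ) : X.F) :=
  inversion_swaps_g_chi_general k X N hodd ι s hdiv χ
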